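/- Let ε > 2^{-k/12} and δ ∈ [0,1] with ε = 2(1-δ)^{k/2}. Let f₁,...,f_t : {0,1}^n → {0,1} and B : ({0,1}^n)^k → {0,1}^k satisfy: (1) for all i ≠ j, Pr over x̄ ∈ ({0,1}^n)^k that f_i^{⊕k}(x̄) = f_j^{⊕k}(x̄) is strictly less than 1/2 + ε⁶/2; and (2) for all i, Pr over x̄ that f_i^k(x̄) = B(x̄) is at least ε. Then t ≤ 2/ε. -/

import Mathlib

/-!
If `f_i` and `f_j` agree on a fraction `a` of the inputs, the `k`-wise XORs agree with probability
`(1 + (2a - 1)^k) / 2`, so hypothesis (1) gives `2a - 1 < ε^(6/k)`. The agreement sets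
`{x̄ | f_i^k(x̄) = B(x̄)}` and `{x̄ | f_j^k(x̄) = B(x̄)}` therefore meet in a fraction at most
`a^k < ((1 + ε^(6/k)) / 2)^k`, which is at most `ε^(68/25)` by `cosh y ≤ exp (y^2 / 2)` and
`ε > 2^(-k/12)`. With more than `2/ε` functions, `m = ⌊2/ε⌋` of them would violate the Bonferroni
inequality `Σ Pr[A_i] - Σ_{i<j} Pr[A_i ∩ A_j] ≤ 1`, because `m(m-1) ε^(68/25) ≤ 2(mε - 1)` holds at
both ends of `2/(m+1) ≤ ε ≤ 2/m` and hence, by convexity, in between. The exponent `68/25` is small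
enough for the first estimate (which allows up to `3 - 3 log 2 / 8 ≈ 2.74`) and large enough for
the endpoint inequality `(j - 1) (2/j)^(43/25) ≤ 1`, which is nearly tight at `j = 3`.
-/

open Classical Finset

/-- Uniform probability of an event over a finite type. -/
noncomputable def pr {α : Type*} [Fintype α] (p : α → Prop) : ℝ :=
  ((Finset.univ.filter p).card : ℝ) / (Fintype.card α : ℝ)

/-- k-wise XOR of `f` on a tuple: true iff an odd number of coordinates map to `true`. -/
def xorf {n k : ℕ} (f : (Fin n → Bool) → Bool) (x : Fin k → Fin n → Bool) : Prop :=
  Odd ((Finset.univ.filter fun i => f (x i) = true).card)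

lemma pr_eq_sum_ite {α : Type*} [Fintype α] (p : α → Prop) [DecidablePred p] :
    pr p = (∑ x, if p x then (1 : ℝ) else 0) / Fintype.card α := by
  rw [pr, sum_boole]
  congr!

lemma pr_nonneg {α : Type*} [Fintype α] (p : α → Prop) : 0 ≤ pr p :=
  div_nonneg (Nat.cast_nonneg _) (Nat.cast_nonneg _)

lemma pr_le_one {α : Type*} [Fintype α] (p : α → Prop) : pr p ≤ 1 :=
  div_le_one_of_le₀ (by exact_mod_cast card_le_univ _) (Nat.cast_nonneg _)

lemma pr_mono {α : Type*} [Fintype α] {p q : α → Prop} (h : ∀ x, p x → q x) : pr p ≤ pr q :=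
  div_le_div_of_nonneg_right
    (by exact_mod_cast card_le_card (monotone_filter_right _ fun x _ => h x)) (Nat.cast_nonneg _)

lemma sum_prod_apply_eq_pow {ι α R : Type*} [Fintype ι] [DecidableEq ι] [Fintype α]
    [CommSemiring R] (g : α → R) :
    ∑ x : ι → α, ∏ i, g (x i) = (∑ a, g a) ^ Fintype.card ι := by
  rw [← Fintype.prod_sum (fun _ a => g a), prod_const, card_univ]

lemma pr_forall_apply {ι α : Type*} [Fintype ι] [DecidableEq ι] [Fintype α] (p : α → Prop) :
    pr (fun x : ι → α => ∀ i, p (x i)) = pr p ^ Fintype.card ι := by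
  rw [pr_eq_sum_ite, pr_eq_sum_ite, div_pow, ← sum_prod_apply_eq_pow, Fintype.card_fun]
  simp only [Fintype.prod_boole]
  push_cast
  rfl

lemma pow_card_filter {ι M : Type*} [CommMonoid M] (a : M) (s : Finset ι) (p : ι → Prop)
    [DecidablePred p] : a ^ #(s.filter p) = ∏ i ∈ s, if p i then a else 1 := by
  rw [prod_ite, prod_const, prod_const_one, mul_one]

lemma ite_odd_iff_odd (a b : ℕ) [Decidable (Odd a ↔ Odd b)] :
    (if (Odd a ↔ Odd b) then (1 : ℝ) else 0) = (1 + (-1) ^ a * (-1) ^ b) / 2 := by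
  rcases Nat.even_or_odd a with ha | ha <;> rcases Nat.even_or_odd b with hb | hb <;>
    simp [ha.neg_one_pow, hb.neg_one_pow, Nat.not_odd_iff_even.2, ha, hb]

lemma pr_xorf_iff {n k : ℕ} (p q : (Fin n → Bool) → Bool) :
    pr (fun x : Fin k → Fin n → Bool => xorf p x ↔ xorf q x)
      = (1 + (2 * pr (fun y => p y = q y) - 1) ^ k) / 2 := by
  let s : Bool → ℝ := fun b => if b then -1 else 1
  have hparity : ∀ x : Fin k → Fin n → Bool, (if (xorf p x ↔ xorf q x) then (1 : ℝ) else 0)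
      = (1 + ∏ l, s (p (x l)) * s (q (x l))) / 2 := by
    intro x
    rw [xorf, xorf, ite_odd_iff_odd, pow_card_filter, pow_card_filter, ← prod_mul_distrib]
  have hs : ∀ y, s (p y) * s (q y) = 2 * (if p y = q y then 1 else 0) - 1 := by
    intro y; cases p y <;> cases q y <;> norm_num [s]
  rw [pr_eq_sum_ite, pr_eq_sum_ite, sum_congr rfl fun x _ => hparity x, ← sum_div,
    sum_add_distrib, sum_prod_apply_eq_pow fun y => s (p y) * s (q y),
    sum_congr rfl fun y _ => hs y, sum_sub_distrib, ← mul_sum]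
  simp only [sum_const, card_univ, Fintype.card_fun (α := Fin k), Fintype.card_fin, nsmul_eq_mul,
    mul_one, Nat.cast_pow]
  set N : ℝ := (Fintype.card (Fin n → Bool) : ℝ)
  set E : ℝ := ∑ y, if p y = q y then 1 else 0
  have hN : N ≠ 0 := by positivity
  rw [show 2 * (E / N) - 1 = (2 * E - N) / N by field_simp, div_pow]
  field_simp

lemma pr_forall_eq_lt_of_pr_xorf_iff_lt {n k : ℕ} (hk : k ≠ 0) {p q : (Fin n → Bool) → Bool}
    {ε : ℝ} (hε : 0 < ε)
    (h : pr (fun x : Fin k → Fin n → Bool => xorf p x ↔ xorf q x) < 1 / 2 + ε ^ 6 / 2) :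
    pr (fun x : Fin k → Fin n → Bool => ∀ l, p (x l) = q (x l))
      < ((1 + ε ^ (6 / k : ℝ)) / 2) ^ k := by
  set a := pr fun y => p y = q y
  have hpow : (ε ^ (6 / k : ℝ)) ^ k = ε ^ 6 := by
    rw [← Real.rpow_mul_natCast hε.le, div_mul_cancel₀ _ (Nat.cast_ne_zero.2 hk)]
    norm_num
  rw [pr_xorf_iff] at h
  have hcorr : 2 * a - 1 < ε ^ (6 / k : ℝ) :=
    lt_of_pow_lt_pow_left₀ k (by positivity) (by linarith)
  rw [pr_forall_apply (fun y => p y = q y), Fintype.card_fin]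
  exact pow_lt_pow_left₀ (by linarith) (pr_nonneg _) hk

lemma one_add_exp_neg_div_two_le (w : ℝ) :
    (1 + Real.exp (-w)) / 2 ≤ Real.exp (w ^ 2 / 8 - w / 2) := by
  have hcosh : (1 + Real.exp (-w)) / 2 = Real.exp (-(w / 2)) * Real.cosh (w / 2) := by
    rw [Real.cosh_eq, mul_div_assoc', mul_add, ← Real.exp_add, ← Real.exp_add]
    ring_nf
    rw [Real.exp_zero]
    ring
  rw [hcosh, show w ^ 2 / 8 - w / 2 = -(w / 2) + (w / 2) ^ 2 / 2 by ring, Real.exp_add]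
  gcongr
  exact Real.cosh_le_exp_half_sq _

lemma one_add_rpow_div_two_pow_le {k : ℕ} (hk : k ≠ 0) {ε : ℝ} (hε0 : 0 < ε) (hε1 : ε ≤ 1)
    (hεk : (2 : ℝ) ^ (-(k : ℝ) / 12) < ε) :
    ((1 + ε ^ (6 / k : ℝ)) / 2) ^ k ≤ ε ^ (68 / 25 : ℝ) := by
  obtain ⟨L, rfl⟩ : ∃ L, ε = Real.exp (-L) := ⟨-Real.log ε, by rw [neg_neg, Real.exp_log hε0]⟩
  have hkpos : (0 : ℝ) < k := by positivity
  have hL0 : 0 ≤ L := by simpa using hε1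
  have hLk : 12 * L ≤ k * (7 / 10) := by
    rw [Real.rpow_def_of_pos two_pos, Real.exp_lt_exp] at hεk
    have := mul_lt_mul_of_pos_left
      (Real.log_two_lt_d9.trans (by norm_num : (0.6931471808 : ℝ) < 7 / 10)) hkpos
    linarith
  have hquad : 9 * L ^ 2 / (2 * k) ≤ 7 / 25 * L := by
    rw [div_le_iff₀ (by positivity)]
    nlinarith [mul_le_mul_of_nonneg_left hLk hL0]
  calc ((1 + Real.exp (-L) ^ (6 / k : ℝ)) / 2) ^ k
      ≤ Real.exp ((6 * L / k) ^ 2 / 8 - 6 * L / k / 2) ^ k := by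
        rw [← Real.exp_mul, neg_mul, ← mul_div_assoc, mul_comm L]
        gcongr
        exact one_add_exp_neg_div_two_le _
    _ = Real.exp (9 * L ^ 2 / (2 * k) - 3 * L) := by
        rw [← Real.exp_nat_mul]; congr 1; field_simp; ring
    _ ≤ Real.exp (-L * (68 / 25)) := by gcongr; linarith
    _ = Real.exp (-L) ^ (68 / 25 : ℝ) := Real.exp_mul _ _

lemma two_mul_le_two_add_mul_self_sub (r : ℕ) : 2 * r ≤ 2 + (r * r - r) := by
  obtain h | h := Nat.lt_or_ge r 2
  · interval_cases r <;> simp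
  · have : 3 * r ≤ r * r + 2 := by nlinarith
    omega

lemma two_mul_sum_pr_le {α ι : Type*} [Fintype α] (T : Finset ι) (A : ι → α → Prop) :
    2 * ∑ i ∈ T, pr (A i) ≤ 2 + ∑ q ∈ T.offDiag, pr fun x => A q.1 x ∧ A q.2 x := by
  have hpoint : ∀ x, 2 * ∑ i ∈ T, (if A i x then (1 : ℝ) else 0)
      ≤ 2 + ∑ q ∈ T.offDiag, if A q.1 x ∧ A q.2 x then (1 : ℝ) else 0 := by
    intro x
    have hoff : T.offDiag.filter (fun q => A q.1 x ∧ A q.2 x) = (T.filter (A · x)).offDiag := by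
      ext q; simp only [mem_filter, mem_offDiag]; tauto
    rw [sum_boole, sum_boole, hoff, offDiag_card]
    exact_mod_cast two_mul_le_two_add_mul_self_sub _
  simp only [pr_eq_sum_ite, ← sum_div]
  rw [sum_comm, mul_div_assoc', sum_comm (s := T.offDiag), mul_sum]
  calc (∑ x, 2 * ∑ i ∈ T, if A i x then (1 : ℝ) else 0) / Fintype.card α
      ≤ (∑ x : α, (2 + ∑ q ∈ T.offDiag, if A q.1 x ∧ A q.2 x then (1 : ℝ) else 0))
          / Fintype.card α := by gcongr with x; exact hpoint x
    _ = 2 * (Fintype.card α / Fintype.card α)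
          + (∑ x : α, ∑ q ∈ T.offDiag, if A q.1 x ∧ A q.2 x then (1 : ℝ) else 0)
          / Fintype.card α := by
        rw [sum_add_distrib, add_div, sum_const, card_univ, nsmul_eq_mul, mul_comm, mul_div_assoc]
    _ ≤ 2 + (∑ x : α, ∑ q ∈ T.offDiag, if A q.1 x ∧ A q.2 x then (1 : ℝ) else 0)
          / Fintype.card α := by
        gcongr; exact mul_le_of_le_one_right zero_le_two (div_self_le_one _)

lemma two_pow_mul_sub_one_pow_le (j : ℕ) (hj : 2 ≤ j) : 2 ^ 43 * (j - 1) ^ 25 ≤ j ^ 43 := by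
  obtain hj6 | hj6 := Nat.lt_or_ge j 6
  · interval_cases j <;> norm_num
  · calc 2 ^ 43 * (j - 1) ^ 25 ≤ j ^ 18 * j ^ 25 :=
          Nat.mul_le_mul ((by norm_num : 2 ^ 43 ≤ 6 ^ 18).trans (Nat.pow_le_pow_left hj6 18))
            (Nat.pow_le_pow_left (Nat.sub_le j 1) 25)
      _ = j ^ 43 := by ring

lemma sub_one_mul_two_div_rpow_le_one (j : ℕ) (hj : 2 ≤ j) :
    ((j : ℝ) - 1) * (2 / j) ^ (43 / 25 : ℝ) ≤ 1 := by
  have hj1 : (1 : ℝ) ≤ j - 1 := by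
    have : (2 : ℝ) ≤ j := by exact_mod_cast hj
    linarith
  have hpow : ((j : ℝ) - 1) ^ 25 * (2 / j) ^ 43 ≤ 1 := by
    have := two_pow_mul_sub_one_pow_le j hj
    rw [div_pow, mul_div_assoc', div_le_one (by positivity)]
    rw [← Nat.cast_le (α := ℝ), Nat.cast_mul, Nat.cast_pow, Nat.cast_pow, Nat.cast_pow,
      Nat.cast_sub (by omega)] at this
    push_cast at this
    linarith
  calc ((j : ℝ) - 1) * (2 / j) ^ (43 / 25 : ℝ)
      = (((j : ℝ) - 1) ^ 25 * (2 / j) ^ 43) ^ (25⁻¹ : ℝ) := by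
        rw [Real.mul_rpow (by positivity) (by positivity),
          ← Real.rpow_natCast_mul (by positivity), ← Real.rpow_natCast_mul (by positivity)]
        norm_num
    _ ≤ 1 := Real.rpow_le_one (by positivity) hpow (by norm_num)

lemma mul_sub_one_mul_rpow_le {m : ℕ} (hm : 2 ≤ m) {ε : ℝ}
    (hε : ε ∈ Set.Icc (2 / ((m : ℝ) + 1)) (2 / m)) :
    m * (m - 1) * ε ^ (68 / 25 : ℝ) ≤ 2 * (m * ε - 1) := by
  have hm2 : (2 : ℝ) ≤ m := by exact_mod_cast hm
  let g : ℝ → ℝ := fun x => m * (m - 1) * x ^ (68 / 25 : ℝ) - 2 * m * x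
  have hconv : ConvexOn ℝ (Set.Ici 0) g :=
    ((convexOn_rpow (by norm_num)).smul (by nlinarith)).sub
      ((concaveOn_id (convex_Ici 0)).smul (by positivity : (0 : ℝ) ≤ 2 * m))
  have hsplit : ∀ x : ℝ, 0 < x →
      g x = 2 * x * ((m - 1) / 2 * (m * x ^ (43 / 25 : ℝ)) - m) := by
    intro x hx
    simp only [g]
    rw [show (68 / 25 : ℝ) = 1 + 43 / 25 by norm_num, Real.rpow_one_add' hx.le (by norm_num)]
    ring
  have hleft : g (2 / (m + 1)) ≤ -2 := by
    have h := sub_one_mul_two_div_rpow_le_one (m + 1) (by omega)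
    push_cast at h
    rw [add_sub_cancel_right] at h
    calc g (2 / (m + 1)) ≤ 2 * (2 / (m + 1)) * ((m - 1) / 2 * 1 - m) := by
          rw [hsplit _ (by positivity)]
          gcongr
          linarith
      _ = -2 := by field_simp; ring
  have hright : g (2 / m) ≤ -2 := by
    have h := sub_one_mul_two_div_rpow_le_one m hm
    calc g (2 / m) = 2 * (((m : ℝ) - 1) * (2 / m) ^ (43 / 25 : ℝ)) - 4 := by
          rw [hsplit _ (by positivity)]; field_simp; ring
      _ ≤ 2 * 1 - 4 := by gcongr
      _ = -2 := by norm_num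
  have := (hconv.le_on_segment (Set.mem_Ici.2 (by positivity)) (Set.mem_Ici.2 (by positivity))
    (by rwa [segment_eq_Icc (hε.1.trans hε.2)])).trans (max_le hleft hright)
  simp only [g] at this
  linarith

lemma card_le_two_div_of_pr_inter_lt {α ι : Type*} [Fintype α] [Fintype ι] (A : ι → α → Prop)
    {ε : ℝ} (hε0 : 0 < ε) (hε1 : ε ≤ 1) (hA : ∀ i, ε ≤ pr (A i))
    (hAA : ∀ i j, i ≠ j → pr (fun x => A i x ∧ A j x) < ε ^ (68 / 25 : ℝ)) :
    (Fintype.card ι : ℝ) ≤ 2 / ε := by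
  by_contra! hcard
  set m := ⌊2 / ε⌋₊
  have hm2 : 2 ≤ m := Nat.le_floor (by rw [le_div_iff₀ hε0]; push_cast; linarith)
  have hmε : ε ∈ Set.Icc (2 / ((m : ℝ) + 1)) (2 / m) := by
    have hlt := Nat.lt_floor_add_one (2 / ε)
    have hle := Nat.floor_le (by positivity : 0 ≤ 2 / ε)
    constructor
    · rw [div_le_iff₀ (by positivity)]; rw [div_lt_iff₀ hε0] at hlt; linarith
    · rw [le_div_iff₀ (by positivity)]; rw [le_div_iff₀ hε0] at hle; linarith
  obtain ⟨T, -, hT⟩ := exists_subset_card_eq (s := (univ : Finset ι)) (n := m)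
    (by rw [card_univ]; exact_mod_cast ((Nat.floor_le (by positivity)).trans_lt hcard).le)
  have hsum : 2 * (m * ε) ≤ 2 * ∑ i ∈ T, pr (A i) := by
    have := card_nsmul_le_sum T (fun i => pr (A i)) ε fun i _ => hA i
    rw [hT, nsmul_eq_mul] at this
    linarith
  have hoff : ∑ q ∈ T.offDiag, pr (fun x => A q.1 x ∧ A q.2 x)
      < m * (m - 1) * ε ^ (68 / 25 : ℝ) := by
    have hne : T.offDiag.Nonempty := by
      rw [← card_pos, offDiag_card, hT]
      have : 2 * m ≤ m * m := Nat.mul_le_mul_right m hm2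
      omega
    calc _ < ∑ _q ∈ T.offDiag, ε ^ (68 / 25 : ℝ) :=
          sum_lt_sum_of_nonempty hne fun q hq => hAA _ _ (mem_offDiag.1 hq).2.2
      _ = _ := by
          rw [sum_const, offDiag_card, hT, nsmul_eq_mul, Nat.cast_sub (Nat.le_mul_self m)]
          push_cast; ring
  linarith [two_mul_sum_pr_le T A, mul_sub_one_mul_rpow_le hm2 hmε]

theorem stmt6_general (n k t : ℕ) (ε : ℝ) (hεlb : ε > (2 : ℝ) ^ (-(k : ℝ)/12))
    (f : Fin t → (Fin n → Bool) → Bool)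
    (B : (Fin k → Fin n → Bool) → (Fin k → Bool))
    (h1 : ∀ i j, i ≠ j →
      pr (fun x : Fin k → Fin n → Bool => (xorf (f i) x ↔ xorf (f j) x))
        < 1/2 + ε^6/2)
    (h2 : ∀ i, pr (fun x : Fin k → Fin n → Bool =>
        (fun l => f i (x l)) = B x) ≥ ε) :
    (t : ℝ) ≤ 2 / ε := by
  have hε0 : 0 < ε := (Real.rpow_pos_of_pos two_pos _).trans hεlb
  obtain rfl | ht := Nat.eq_zero_or_pos t
  · simp only [Nat.cast_zero]; positivity
  have hε1 : ε ≤ 1 := (h2 ⟨0, ht⟩).trans (pr_le_one _)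
  have hk : k ≠ 0 := by
    rintro rfl
    norm_num at hεlb
    linarith
  have hpair : ∀ i j, i ≠ j → pr (fun x : Fin k → Fin n → Bool =>
      (fun l => f i (x l)) = B x ∧ (fun l => f j (x l)) = B x) < ε ^ (68 / 25 : ℝ) :=
    fun i j hij => calc
      _ ≤ pr fun x : Fin k → Fin n → Bool => ∀ l, f i (x l) = f j (x l) :=
        pr_mono fun x hx l => (congrFun hx.1 l).trans (congrFun hx.2 l).symm
      _ < ((1 + ε ^ (6 / k : ℝ)) / 2) ^ k :=
        pr_forall_eq_lt_of_pr_xorf_iff_lt hk hε0 (h1 i j hij)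
      _ ≤ ε ^ (68 / 25 : ℝ) := one_add_rpow_div_two_pow_le hk hε0 hε1 hεlb
  simpa using card_le_two_div_of_pr_inter_lt _ hε0 hε1 h2 hpair

theorem stmt6 (n k t : ℕ) (ε δ : ℝ) (hεlb : ε > (2 : ℝ) ^ (-(k : ℝ)/12))
    (hδ0 : 0 ≤ δ) (hδ1 : δ ≤ 1)
    (hεδ : ε = 2 * (1 - δ) ^ ((k : ℝ)/2))
    (f : Fin t → (Fin n → Bool) → Bool)
    (B : (Fin k → Fin n → Bool) → (Fin k → Bool))
    (h1 : ∀ i j, i ≠ j →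
      pr (fun x : Fin k → Fin n → Bool => (xorf (f i) x ↔ xorf (f j) x))
        < 1/2 + ε^6/2)
    (h2 : ∀ i, pr (fun x : Fin k → Fin n → Bool =>
        (fun l => f i (x l)) = B x) ≥ ε) :
    (t : ℝ) ≤ 2 / ε :=
  stmt6_general n k t ε hεlb f B h1 h2
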